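/- Let S = {x_1, ..., x_n} be a finite join-closed subset of a lattice P, ordered so that x_i ≼ x_j implies i ≤ j, and let f : P → ℝ. Define Φ on S by Φ(x_k) = Σ_{x_k ≼ x_v} f(x_v) μ_S(x_k, x_v). Then det((f(x_i ∨ x_j))_{i,j=1}^n) = Φ(x_1) Φ(x_2) ⋯ Φ(x_n). -/

import Mathlib

/-!
Let `ζ` be the zeta matrix of `x`: `ζ i v = 1` if `x i ≤ x v` and `0` otherwise. Since the
range of `x` is join closed, `x i ⊔ x j = x k` for some `k`, and
`x k ≤ x v ↔ x i ≤ x v ∧ x j ≤ x v`, so `f (x i ⊔ x j) = ∑ v, ζ i v * Φ v * ζ j v`, i.e. the join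
matrix is `ζ * diagonal Φ * ζᵀ`. Listing `x` compatibly with `≤` makes `ζ` upper unitriangular,
so its determinant is `1`.
-/

open scoped Classical

namespace Matrix

variable {ι P R : Type*} [Fintype ι]

noncomputable def zetaMatrix [Preorder P] [Zero R] [One R] (x : ι → P) : Matrix ι ι R :=
  of fun i j => if x i ≤ x j then 1 else 0

theorem zetaMatrix_mul_diagonal_mul_transpose_apply [DecidableEq ι] [Preorder P]
    [NonAssocSemiring R] (x : ι → P) (Φ : ι → R) (i j : ι) :
    (zetaMatrix x * diagonal Φ * (zetaMatrix x)ᵀ : Matrix ι ι R) i j =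
      ∑ v ∈ Finset.univ.filter fun v => x i ≤ x v ∧ x j ≤ x v, Φ v := by
  rw [mul_apply, Finset.sum_filter]
  simp only [mul_diagonal, transpose_apply, zetaMatrix, of_apply]
  refine Finset.sum_congr rfl fun v _ => ?_
  split_ifs <;> simp_all

theorem join_matrix_eq_zetaMatrix_mul_diagonal_mul_transpose [DecidableEq ι] [SemilatticeSup P]
    [NonAssocSemiring R] (x : ι → P) (hjoin : ∀ i j, ∃ k, x k = x i ⊔ x j) (f : P → R)
    (Φ : ι → R) (hΦ : ∀ k, f (x k) = ∑ v ∈ Finset.univ.filter fun v => x k ≤ x v, Φ v) :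
    of (fun i j => f (x i ⊔ x j)) = zetaMatrix x * diagonal Φ * (zetaMatrix x)ᵀ := by
  ext i j
  obtain ⟨k, hk⟩ := hjoin i j
  rw [of_apply, ← hk, hΦ k, zetaMatrix_mul_diagonal_mul_transpose_apply]
  simp only [hk, sup_le_iff]

theorem det_zetaMatrix [LinearOrder ι] [DecidableEq ι] [Preorder P] [CommRing R] (x : ι → P)
    (hord : ∀ i j, x i ≤ x j → i ≤ j) : (zetaMatrix x : Matrix ι ι R).det = 1 := by
  have htri : (zetaMatrix x : Matrix ι ι R).IsUpperTriangular := fun i j hji =>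
    if_neg fun hij => (hord i j hij).not_gt hji
  rw [det_of_isUpperTriangular htri]
  simp [zetaMatrix]

end Matrix

open Matrix in
theorem join_matrix_det_general {P : Type*} [Lattice P] {n : ℕ} (x : Fin n → P)
    (hord : ∀ i j, x i ≤ x j → i ≤ j)
    (hjoin : ∀ i j, ∃ k, x k = x i ⊔ x j)
    (f : P → ℝ) (Φ : Fin n → ℝ)
    (hΦ : ∀ k, f (x k) = ∑ v ∈ Finset.univ.filter fun v => x k ≤ x v, Φ v) :
    (Matrix.of fun i j => f (x i ⊔ x j)).det = ∏ i, Φ i := by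
  rw [join_matrix_eq_zetaMatrix_mul_diagonal_mul_transpose x hjoin f Φ hΦ, det_mul, det_mul,
    det_transpose, det_zetaMatrix x hord, det_diagonal, one_mul, mul_one]

/-- **Determinant of a join matrix on a join-closed set.** -/
theorem join_matrix_det {P : Type*} [Lattice P] {n : ℕ} (x : Fin n → P)
    (hinj : Function.Injective x)
    (hord : ∀ i j, x i ≤ x j → i ≤ j)
    (hjoin : ∀ i j, ∃ k, x k = x i ⊔ x j)
    (f : P → ℝ) (Φ : Fin n → ℝ)
    (hΦ : ∀ k, f (x k) = ∑ v ∈ Finset.univ.filter fun v => x k ≤ x v, Φ v) :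
    (Matrix.of fun i j => f (x i ⊔ x j)).det = ∏ i, Φ i :=
  join_matrix_det_general x hord hjoin f Φ hΦ
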